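/- For probability vectors p, q in ℝ^d with TV(p,q) ≤ ε, the min-entropies satisfy |H_∞(p) − H_∞(q)| ≤ log₂(1 + ε·d), and this bound is tight: it is attained for p = (1/d + ε, 1/d, ..., 1/d, 1/d − ε) and q = u the uniform distribution (for ε ≤ 1/d). -/

import Mathlib

open Finset Real

/-!
If `q` attains its maximum at `i`, then `q i - p i` is at most the total variation distance,
because the two vectors have the same mass; hence `max q ≤ max p + ε`. Since `max p ≥ 1/d`,
the additive slack `ε` is at most the multiplicative factor `1 + ε d`, and taking `log₂` gives
the bound. For the perturbed uniform vector the maximum is `1/d + ε = (1/d)(1 + ε d)` while the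
distance to the uniform vector is `ε`, so the bound is attained.
-/

section MaxProbability

variable {ι : Type*} [Fintype ι] [Nonempty ι]

lemma one_le_card_mul_sup'_of_sum_eq_one {p : ι → ℝ} (hp : ∑ i, p i = 1) :
    1 ≤ Fintype.card ι * univ.sup' univ_nonempty p :=
  calc (1 : ℝ) = ∑ i, p i := hp.symm
    _ ≤ ∑ _i : ι, univ.sup' univ_nonempty p := sum_le_sum fun i _ => le_sup' p (mem_univ i)
    _ = Fintype.card ι * univ.sup' univ_nonempty p := by
      rw [sum_const, card_univ, nsmul_eq_mul]

lemma sup'_pos_of_sum_eq_one {p : ι → ℝ} (hp : ∑ i, p i = 1) :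
    0 < univ.sup' univ_nonempty p :=
  pos_of_mul_pos_right (one_pos.trans_le (one_le_card_mul_sup'_of_sum_eq_one hp))
    (Nat.cast_nonneg _)

omit [Nonempty ι] in
lemma sub_le_half_sum_abs_sub {p q : ι → ℝ} (h : ∑ j, p j = ∑ j, q j) (i : ι) :
    q i - p i ≤ (1 / 2) * ∑ j, |p j - q j| := by
  classical
  have hrest : q i - p i = ∑ j ∈ univ.erase i, (p j - q j) := by
    have htotal : ∑ j, (p j - q j) = 0 := by rw [sum_sub_distrib, h, sub_self]
    rw [← add_sum_erase _ _ (mem_univ i)] at htotal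
    linarith
  have hi : q i - p i ≤ |p i - q i| := abs_sub_comm (p i) (q i) ▸ le_abs_self _
  have hrest_le : ∑ j ∈ univ.erase i, (p j - q j) ≤ ∑ j ∈ univ.erase i, |p j - q j| :=
    sum_le_sum fun j _ => le_abs_self _
  have hsplit := add_sum_erase univ (fun j => |p j - q j|) (mem_univ i)
  linarith

lemma sup'_le_sup'_add_half_sum_abs_sub {p q : ι → ℝ} (h : ∑ j, p j = ∑ j, q j) :
    univ.sup' univ_nonempty q ≤ univ.sup' univ_nonempty p + (1 / 2) * ∑ j, |p j - q j| :=
  sup'_le _ _ fun i _ => by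
    linarith [le_sup' p (mem_univ i), sub_le_half_sum_abs_sub h i]

lemma sup'_le_sup'_mul_of_half_sum_abs_sub_le {p q : ι → ℝ} (hp : ∑ i, p i = 1)
    (hq : ∑ i, q i = 1) {ε : ℝ} (hε : (1 / 2) * ∑ i, |p i - q i| ≤ ε) :
    univ.sup' univ_nonempty q ≤ univ.sup' univ_nonempty p * (1 + ε * Fintype.card ι) := by
  have hε0 : 0 ≤ ε := le_trans (by positivity) hε
  calc univ.sup' univ_nonempty q ≤ univ.sup' univ_nonempty p + ε :=
        (sup'_le_sup'_add_half_sum_abs_sub (hp.trans hq.symm)).trans (by linarith)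
    _ ≤ univ.sup' univ_nonempty p + ε * (Fintype.card ι * univ.sup' univ_nonempty p) :=
        (add_le_add_iff_left _).mpr
          (le_mul_of_one_le_right hε0 (one_le_card_mul_sup'_of_sum_eq_one hp))
    _ = univ.sup' univ_nonempty p * (1 + ε * Fintype.card ι) := by ring

end MaxProbability

lemma abs_logb_sub_logb_le {b x y c : ℝ} (hb : 1 < b) (hx : 0 < x) (hy : 0 < y)
    (hxy : x ≤ y * c) (hyx : y ≤ x * c) : |logb b x - logb b y| ≤ logb b c := by
  have hc : 0 < c := pos_of_mul_pos_right (hx.trans_le hxy) hy.le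
  rw [abs_sub_le_iff]
  constructor
  · have := logb_le_logb_of_le hb hx hxy
    rw [logb_mul hy.ne' hc.ne'] at this
    linarith
  · have := logb_le_logb_of_le hb hy hyx
    rw [logb_mul hx.ne' hc.ne'] at this
    linarith

theorem abs_logb_sup'_sub_logb_sup'_le {ι : Type*} [Fintype ι] [Nonempty ι] {p q : ι → ℝ}
    (hp : ∑ i, p i = 1) (hq : ∑ i, q i = 1) {ε : ℝ} (hε : (1 / 2) * ∑ i, |p i - q i| ≤ ε) :
    |logb 2 (univ.sup' univ_nonempty p) - logb 2 (univ.sup' univ_nonempty q)| ≤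
      logb 2 (1 + ε * Fintype.card ι) := by
  have hε' : (1 / 2) * ∑ i, |q i - p i| ≤ ε := by simpa only [abs_sub_comm] using hε
  exact abs_logb_sub_logb_le one_lt_two (sup'_pos_of_sum_eq_one hp) (sup'_pos_of_sum_eq_one hq)
    (sup'_le_sup'_mul_of_half_sum_abs_sub_le hq hp hε')
    (sup'_le_sup'_mul_of_half_sum_abs_sub_le hp hq hε)

section PerturbedUniform

noncomputable def perturbedUniform (d : ℕ) (ε : ℝ) : Fin d → ℝ := fun i =>
  if (i : ℕ) = 0 then 1 / d + ε else if (i : ℕ) = d - 1 then 1 / d - ε else 1 / d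

variable {d : ℕ} {ε : ℝ}

lemma sup'_perturbedUniform [NeZero d] (hε : 0 ≤ ε) :
    univ.sup' univ_nonempty (perturbedUniform d ε) = 1 / d + ε := by
  refine le_antisymm (sup'_le _ _ fun i _ => ?_) (le_sup'_of_le _ (mem_univ 0) ?_)
  · unfold perturbedUniform
    split_ifs <;> linarith
  · simp [perturbedUniform]

lemma half_sum_abs_perturbedUniform_sub (hd : 2 ≤ d) (ε : ℝ) :
    (1 / 2) * ∑ i, |perturbedUniform d ε i - 1 / d| = |ε| := by
  have hlast : d - 1 ≠ 0 := by omega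
  rw [sum_eq_add (⟨0, by omega⟩ : Fin d) ⟨d - 1, by omega⟩ (Fin.ne_of_val_ne hlast.symm)
      (fun i _ hi => by simp [perturbedUniform, Fin.val_ne_of_ne hi.1, Fin.val_ne_of_ne hi.2])
      (by simp) (by simp)]
  simp only [perturbedUniform, one_div, ↓reduceIte, hlast, add_sub_cancel_left, sub_sub_cancel_left,
    abs_neg]
  ring

lemma abs_logb_sup'_perturbedUniform_sub [NeZero d] (hε : 0 ≤ ε) :
    |logb 2 (univ.sup' univ_nonempty (perturbedUniform d ε)) -
        logb 2 (univ.sup' univ_nonempty fun _ : Fin d => (1 : ℝ) / d)| =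
      logb 2 (1 + ε * d) := by
  have hd : (0 : ℝ) < d := Nat.cast_pos.mpr (Nat.pos_of_neZero d)
  have hfactor : (1 : ℝ) / d + ε = 1 / d * (1 + ε * d) := by field_simp
  have hpos : 0 < 1 + ε * d := by positivity
  rw [sup'_perturbedUniform hε, sup'_const, hfactor, logb_mul (by positivity) hpos.ne',
    add_sub_cancel_left, abs_of_nonneg (logb_nonneg one_lt_two (by nlinarith))]

end PerturbedUniform

/-- Tight uniform continuity bound for the min-entropy:
`|H_∞(p) - H_∞(q)| ≤ log₂(1 + ε d)` whenever `TV(p,q) ≤ ε`, with equality attained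
(for `ε ≤ 1/d`) by `p = (1/d + ε, 1/d, …, 1/d, 1/d - ε)` and `q` uniform. -/
theorem stmt8 {d : ℕ} (hd : 2 ≤ d) (ε : ℝ) (hε0 : 0 ≤ ε)
    (Hinf : (Fin d → ℝ) → ℝ)
    (hHinf : ∀ p, Hinf p =
      -Real.logb 2 (Finset.univ.sup' (Finset.univ_nonempty_iff.mpr ⟨⟨0, by omega⟩⟩) p)) :
    (∀ p q : Fin d → ℝ,
        ((∀ i, 0 ≤ p i) ∧ ∑ i, p i = 1) → ((∀ i, 0 ≤ q i) ∧ ∑ i, q i = 1) →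
        (1 / 2) * ∑ i, |p i - q i| ≤ ε →
        |Hinf p - Hinf q| ≤ Real.logb 2 (1 + ε * d)) ∧
      (ε ≤ 1 / d →
        ∀ p u : Fin d → ℝ,
        (p = fun i : Fin d => if (i : ℕ) = 0 then 1 / d + ε
            else if (i : ℕ) = d - 1 then 1 / d - ε else 1 / d) →
        (u = fun _ => (1 : ℝ) / d) →
        |Hinf p - Hinf u| = Real.logb 2 (1 + ε * d) ∧
          (1 / 2) * ∑ i, |p i - u i| = ε) := by
  have : NeZero d := ⟨by omega⟩
  refine ⟨fun p q ⟨_, hp⟩ ⟨_, hq⟩ hε => ?_, fun _ p u hp hu => ?_⟩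
  · rw [hHinf, hHinf, neg_sub_neg, abs_sub_comm]
    simpa only [Fintype.card_fin] using abs_logb_sup'_sub_logb_sup'_le hp hq hε
  · subst hp hu
    rw [hHinf, hHinf, neg_sub_neg, abs_sub_comm]
    exact ⟨abs_logb_sup'_perturbedUniform_sub hε0,
      (half_sum_abs_perturbedUniform_sub hd ε).trans (abs_of_nonneg hε0)⟩
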